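/- arXiv:2604.13259 — 8 statements merged into one kernel-verified Lean document; each statement's English description precedes it below -/
import Mathlib

section
/- Let θ : ℝ → ℝ^d and μ : ℝ → (Fin N → ℝ) be functions with μ t ∈ Δ for all t ≥ 0, and let w : ℝ → ℝ^m satisfy the critic equation: for all t ≥ 0, HasDerivAt w (b(θ t, μ t) − A(θ t, μ t) (w t)) t. Then for all t ≥ 0, ‖w t‖² ≤ exp(−λ_c t) * ‖w 0‖² + (B_b²/λ_c²) * (1 − exp(−λ_c t)). -/
open scoped BigOperators RealInnerProductSpace

/-- The probability simplex on `Fin N`. -/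
def probSimplex (N : ℕ) : Set (Fin N → ℝ) :=
  {μ | (∀ i, 0 ≤ μ i) ∧ ∑ i, μ i = 1}

/-- Softmax policy. -/
noncomputable def softmaxPolicy {N K d : ℕ} (τ : ℝ)
    (ψ : Fin N → Fin K → EuclideanSpace ℝ (Fin d))
    (θ : EuclideanSpace ℝ (Fin d)) (i : Fin N) (a : Fin K) : ℝ :=
  Real.exp (⟪ψ i a, θ⟫ / τ) / ∑ b, Real.exp (⟪ψ i b, θ⟫ / τ)

/-- Occupancy measure. -/
noncomputable def occupancy {N K d : ℕ} (τ : ℝ)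
    (ψ : Fin N → Fin K → EuclideanSpace ℝ (Fin d))
    (θ : EuclideanSpace ℝ (Fin d)) (μ : Fin N → ℝ) (i : Fin N) (a : Fin K) : ℝ :=
  μ i * softmaxPolicy τ ψ θ i a

/-- The averaged reward-weighted feature `b(θ,μ)`. -/
noncomputable def criticb {N K d m : ℕ} (τ : ℝ)
    (r : Fin N → Fin K → ℝ)
    (ψ : Fin N → Fin K → EuclideanSpace ℝ (Fin d))
    (φ : Fin N → Fin K → EuclideanSpace ℝ (Fin m))
    (θ : EuclideanSpace ℝ (Fin d)) (μ : Fin N → ℝ) : EuclideanSpace ℝ (Fin m) :=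
  ∑ i, ∑ a, occupancy τ ψ θ μ i a • r i a • φ i a

/-- The critic operator `A(θ,μ)`. -/
noncomputable def criticA {N K d m : ℕ} (τ lamc : ℝ)
    (ψ : Fin N → Fin K → EuclideanSpace ℝ (Fin d))
    (φ : Fin N → Fin K → EuclideanSpace ℝ (Fin m))
    (θ : EuclideanSpace ℝ (Fin d)) (μ : Fin N → ℝ)
    (v : EuclideanSpace ℝ (Fin m)) : EuclideanSpace ℝ (Fin m) :=
  lamc • v + ∑ i, ∑ a, occupancy τ ψ θ μ i a • ⟪φ i a, v⟫ • φ i a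

/-- `max_{i,a} f i a` over the (nonempty, by `hN, hK`) finite index set. -/
noncomputable def maxOver {N K : ℕ} (hN : 1 ≤ N) (hK : 1 ≤ K)
    (f : Fin N → Fin K → ℝ) : ℝ :=
  Finset.sup' Finset.univ
    (by
      haveI : Nonempty (Fin N) := ⟨⟨0, hN⟩⟩
      haveI : Nonempty (Fin K) := ⟨⟨0, hK⟩⟩
      exact Finset.univ_nonempty)
    (fun p : Fin N × Fin K => f p.1 p.2)

/-!
The energy `V = ‖w‖²` satisfies `V' = 2⟪w, b - A w⟫`. Since the occupancy measure is a probability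
distribution on the pairs `(i, a)`, `⟪w, b⟫ ≤ B_b ‖w‖`, while `⟪w, A w⟫ ≥ λ_c ‖w‖²`. Young's
inequality `2 B_b ‖w‖ ≤ λ_c ‖w‖² + B_b² / λ_c` then gives `V' ≤ -λ_c V + B_b² / λ_c`, and
Grönwall's inequality integrates this differential inequality.
-/

open Real Finset

theorem le_exp_mul_add_of_hasDerivAt_le {f f' : ℝ → ℝ} {lam c : ℝ} (hlam : 0 < lam)
    (hf : ∀ t, 0 ≤ t → HasDerivAt f (f' t) t)
    (bound : ∀ t, 0 ≤ t → f' t ≤ -lam * f t + c) (t : ℝ) (ht : 0 ≤ t) :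
    f t ≤ exp (-lam * t) * f 0 + c / lam * (1 - exp (-lam * t)) := by
  have hgron := le_gronwallBound_of_liminf_deriv_right_le (f := f) (f' := f') (a := 0) (b := t)
    (fun x hx => (hf x hx.1).continuousAt.continuousWithinAt)
    (fun x hx _ hr => (hf x hx.1).hasDerivWithinAt.liminf_right_slope_le hr) le_rfl
    (fun x hx => bound x hx.1) t ⟨ht, le_rfl⟩
  rw [gronwallBound_of_K_ne_0 (neg_ne_zero.2 hlam.ne'), sub_zero] at hgron
  convert hgron using 2
  field_simp
  ring

section Energy

variable {E : Type*} [NormedAddCommGroup E] [InnerProductSpace ℝ E]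

theorem norm_sq_le_of_inner_deriv_le {w w' : ℝ → E} {lam B : ℝ} (hlam : 0 < lam)
    (hw : ∀ t, 0 ≤ t → HasDerivAt w (w' t) t)
    (hdiss : ∀ t, 0 ≤ t → ⟪w t, w' t⟫ ≤ B * ‖w t‖ - lam * ‖w t‖ ^ 2) (t : ℝ) (ht : 0 ≤ t) :
    ‖w t‖ ^ 2 ≤ exp (-lam * t) * ‖w 0‖ ^ 2 + B ^ 2 / lam ^ 2 * (1 - exp (-lam * t)) := by
  have h := le_exp_mul_add_of_hasDerivAt_le (f := (‖w ·‖ ^ 2)) (c := B ^ 2 / lam) hlam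
    (fun s hs => (hw s hs).norm_sq) (fun s hs => ?_) t ht
  · rwa [div_div, ← sq] at h
  have young : 2 * (B * ‖w s‖) ≤ lam * ‖w s‖ ^ 2 + B ^ 2 / lam := by
    have hsq : lam * ‖w s‖ ^ 2 + B ^ 2 / lam - 2 * (B * ‖w s‖) = (lam * ‖w s‖ - B) ^ 2 / lam := by
      field_simp
      ring
    linarith [div_nonneg (sq_nonneg (lam * ‖w s‖ - B)) hlam.le]
  linarith [hdiss s hs]

end Energy

section Critic

variable {N K d m : ℕ} (τ : ℝ) (ψ : Fin N → Fin K → EuclideanSpace ℝ (Fin d))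
  (θ : EuclideanSpace ℝ (Fin d))

theorem softmaxPolicy_nonneg (i : Fin N) (a : Fin K) : 0 ≤ softmaxPolicy τ ψ θ i a := by
  unfold softmaxPolicy
  positivity

theorem sum_softmaxPolicy [Nonempty (Fin K)] (i : Fin N) : ∑ a, softmaxPolicy τ ψ θ i a = 1 := by
  unfold softmaxPolicy
  rw [← sum_div, div_self]
  exact (sum_pos (fun _ _ => exp_pos _) univ_nonempty).ne'

variable {μ : Fin N → ℝ}

theorem occupancy_nonneg (hμ : ∀ i, 0 ≤ μ i) (i : Fin N) (a : Fin K) :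
    0 ≤ occupancy τ ψ θ μ i a :=
  mul_nonneg (hμ i) (softmaxPolicy_nonneg τ ψ θ i a)

theorem sum_sum_occupancy [Nonempty (Fin K)] (hμ : μ ∈ probSimplex N) :
    ∑ i, ∑ a, occupancy τ ψ θ μ i a = 1 := by
  simp only [occupancy, ← mul_sum, sum_softmaxPolicy, mul_one]
  exact hμ.2

theorem inner_criticb_le [Nonempty (Fin K)] (r : Fin N → Fin K → ℝ)
    (φ : Fin N → Fin K → EuclideanSpace ℝ (Fin m)) {B : ℝ}
    (hB : ∀ i a, |r i a| * ‖φ i a‖ ≤ B) (hμ : μ ∈ probSimplex N) (v : EuclideanSpace ℝ (Fin m)) :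
    ⟪v, criticb τ r ψ φ θ μ⟫ ≤ B * ‖v‖ := by
  have hterm : ∀ i a, r i a * ⟪v, φ i a⟫ ≤ B * ‖v‖ := fun i a =>
    calc r i a * ⟪v, φ i a⟫ ≤ |r i a| * |⟪v, φ i a⟫| := (le_abs_self _).trans_eq (abs_mul _ _)
      _ ≤ |r i a| * ‖φ i a‖ * ‖v‖ := by
        rw [mul_assoc, mul_comm ‖φ i a‖]
        gcongr
        exact abs_real_inner_le_norm _ _
      _ ≤ B * ‖v‖ := by gcongr; exact hB i a
  calc ⟪v, criticb τ r ψ φ θ μ⟫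
      = ∑ i, ∑ a, occupancy τ ψ θ μ i a * (r i a * ⟪v, φ i a⟫) := by
        simp only [criticb, inner_sum, real_inner_smul_right]
    _ ≤ ∑ i, ∑ a, occupancy τ ψ θ μ i a * (B * ‖v‖) :=
        sum_le_sum fun i _ => sum_le_sum fun a _ =>
          mul_le_mul_of_nonneg_left (hterm i a) (occupancy_nonneg τ ψ θ hμ.1 i a)
    _ = B * ‖v‖ := by simp_rw [← sum_mul, sum_sum_occupancy τ ψ θ hμ, one_mul]

theorem inner_criticA_ge (lamc : ℝ) (φ : Fin N → Fin K → EuclideanSpace ℝ (Fin m))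
    (hμ : ∀ i, 0 ≤ μ i) (v : EuclideanSpace ℝ (Fin m)) :
    lamc * ‖v‖ ^ 2 ≤ ⟪v, criticA τ lamc ψ φ θ μ v⟫ := by
  have hquad : 0 ≤ ∑ i, ∑ a, occupancy τ ψ θ μ i a * (⟪φ i a, v⟫ * ⟪v, φ i a⟫) :=
    sum_nonneg fun i _ => sum_nonneg fun a _ =>
      mul_nonneg (occupancy_nonneg τ ψ θ hμ i a) (real_inner_comm v (φ i a) ▸ mul_self_nonneg _)
  simp only [criticA, inner_add_right, real_inner_smul_right, inner_sum,
    real_inner_self_eq_norm_sq]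
  linarith

end Critic

theorem le_maxOver {N K : ℕ} (hN : 1 ≤ N) (hK : 1 ≤ K) (f : Fin N → Fin K → ℝ) (i : Fin N)
    (a : Fin K) : f i a ≤ maxOver hN hK f :=
  le_sup' (fun p : Fin N × Fin K => f p.1 p.2) (mem_univ (i, a))

theorem critic_energy_estimate_general {N K d m : ℕ}
    (hN : 1 ≤ N) (hK : 1 ≤ K)
    (τ lamc : ℝ) (hlam : 0 < lamc)
    (r : Fin N → Fin K → ℝ)
    (ψ : Fin N → Fin K → EuclideanSpace ℝ (Fin d))
    (φ : Fin N → Fin K → EuclideanSpace ℝ (Fin m))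
    (θ : ℝ → EuclideanSpace ℝ (Fin d)) (μ : ℝ → (Fin N → ℝ))
    (hμ : ∀ t : ℝ, 0 ≤ t → μ t ∈ probSimplex N)
    (w : ℝ → EuclideanSpace ℝ (Fin m))
    (hw : ∀ t : ℝ, 0 ≤ t →
      HasDerivAt w (criticb τ r ψ φ (θ t) (μ t) - criticA τ lamc ψ φ (θ t) (μ t) (w t)) t) :
    ∀ t : ℝ, 0 ≤ t →
      ‖w t‖ ^ 2 ≤ Real.exp (-lamc * t) * ‖w 0‖ ^ 2 +
        ((maxOver hN hK fun i a => |r i a|) * (maxOver hN hK fun i a => ‖φ i a‖)) ^ 2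
          / lamc ^ 2 * (1 - Real.exp (-lamc * t)) := by
  have : Nonempty (Fin K) := ⟨⟨0, hK⟩⟩
  have hB : ∀ i a, |r i a| * ‖φ i a‖ ≤
      (maxOver hN hK fun i a => |r i a|) * (maxOver hN hK fun i a => ‖φ i a‖) := fun i a =>
    have hr := le_maxOver hN hK (fun i a => |r i a|) i a
    mul_le_mul hr (le_maxOver hN hK (fun i a => ‖φ i a‖) i a) (norm_nonneg _)
      ((abs_nonneg _).trans hr)
  refine norm_sq_le_of_inner_deriv_le hlam hw fun t ht => ?_
  rw [inner_sub_right]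
  linarith [inner_criticb_le τ ψ (θ t) r φ hB (hμ t ht) (w t),
    inner_criticA_ge τ ψ (θ t) lamc φ (hμ t ht).1 (w t)]

theorem critic_energy_estimate {N K d m : ℕ}
    (hN : 1 ≤ N) (hK : 1 ≤ K) (hd : 1 ≤ d) (hm : 1 ≤ m)
    (τ lamc : ℝ) (hτ : 0 < τ) (hlam : 0 < lamc)
    (r : Fin N → Fin K → ℝ)
    (ψ : Fin N → Fin K → EuclideanSpace ℝ (Fin d))
    (φ : Fin N → Fin K → EuclideanSpace ℝ (Fin m))
    (θ : ℝ → EuclideanSpace ℝ (Fin d)) (μ : ℝ → (Fin N → ℝ))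
    (hμ : ∀ t : ℝ, 0 ≤ t → μ t ∈ probSimplex N)
    (w : ℝ → EuclideanSpace ℝ (Fin m))
    (hw : ∀ t : ℝ, 0 ≤ t →
      HasDerivAt w (criticb τ r ψ φ (θ t) (μ t) - criticA τ lamc ψ φ (θ t) (μ t) (w t)) t) :
    ∀ t : ℝ, 0 ≤ t →
      ‖w t‖ ^ 2 ≤ Real.exp (-lamc * t) * ‖w 0‖ ^ 2 +
        ((maxOver hN hK fun i a => |r i a|) * (maxOver hN hK fun i a => ‖φ i a‖)) ^ 2
          / lamc ^ 2 * (1 - Real.exp (-lamc * t)) :=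
  critic_energy_estimate_general hN hK τ lamc hlam r ψ φ θ μ hμ w hw
end

section
/- Let R > 0, let h : ℝ → ℝ be continuous, and let u : ℝ → ℝ satisfy HasDerivAt u ((R² − (u t)²) * h t) t for all t ≥ 0. If |u 0| < R, then |u t| < R for all t ≥ 0. -/
open Set

/- With `w = R² - u²` the equation becomes the linear equation `w' = -2 u h w`, whose coefficient
is continuous, hence bounded on compact time intervals. By Grönwall (uniqueness for the linear
equation), a solution vanishing at some time vanishes at all earlier times; so `w`, being positive
at time `0`, can never reach `0`, and `u` stays in `(-R, R)`. -/

theorem eqOn_zero_of_hasDerivAt_smul_self_of_right_eq_zero {E : Type*} [NormedAddCommGroup E]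
    [NormedSpace ℝ E] {g : ℝ → ℝ} {w : ℝ → E} {a b : ℝ} (hg : ContinuousOn g (Icc a b))
    (hw : ∀ t ∈ Icc a b, HasDerivAt w (g t • w t) t) (hb : w b = 0) :
    EqOn w 0 (Icc a b) := by
  obtain ⟨K, hK⟩ := isCompact_Icc.exists_bound_of_continuousOn hg
  refine ODE_solution_unique_of_mem_Icc_left (v := fun t x => g t • x) (s := fun _ => univ)
    (K := K.toNNReal) (fun t ht => ?_) (fun t ht => (hw t ht).continuousAt.continuousWithinAt)
    (fun t ht => (hw t (Ioc_subset_Icc_self ht)).hasDerivWithinAt) (fun _ _ => trivial)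
    continuousOn_const
    (fun t _ => by rw [Pi.zero_apply, smul_zero]; exact hasDerivWithinAt_const t _ 0)
    (fun _ _ => trivial) hb
  refine ((lipschitzWith_smul (g t)).weaken ?_).lipschitzOnWith
  rw [← NNReal.coe_le_coe, coe_nnnorm, Real.coe_toNNReal']
  exact (hK t (Ioc_subset_Icc_self ht)).trans (le_max_left _ _)

theorem pos_of_hasDerivAt_mul_self_of_pos {g w : ℝ → ℝ} {a b : ℝ} (hab : a ≤ b)
    (hg : ContinuousOn g (Icc a b)) (hw : ∀ t ∈ Icc a b, HasDerivAt w (g t * w t) t)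
    (ha : 0 < w a) : 0 < w b := by
  by_contra! hwb
  have hw_cont : ContinuousOn w (Icc a b) := fun t ht =>
    (hw t ht).continuousAt.continuousWithinAt
  obtain ⟨c, ⟨hac, hcb⟩, hc⟩ := intermediate_value_Icc' hab hw_cont ⟨hwb, ha.le⟩
  have hsub : Icc a c ⊆ Icc a b := Icc_subset_Icc_right hcb
  have := eqOn_zero_of_hasDerivAt_smul_self_of_right_eq_zero (hg.mono hsub)
    (fun t ht => hw t (hsub ht)) hc (left_mem_Icc.mpr hac)
  exact ha.ne' this

theorem HasDerivAt.const_sub_sq_of_confined {u : ℝ → ℝ} {c k t : ℝ}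
    (hu : HasDerivAt u ((c - u t ^ 2) * k) t) :
    HasDerivAt (fun s => c - u s ^ 2) (-(2 * u t * k) * (c - u t ^ 2)) t := by
  refine ((hu.fun_pow 2).const_sub c).congr_deriv ?_
  push_cast
  ring

theorem confined_interior_invariance_general (R : ℝ)
    (h : ℝ → ℝ) (hcont : Continuous h)
    (u : ℝ → ℝ)
    (hu : ∀ t : ℝ, 0 ≤ t → HasDerivAt u ((R ^ 2 - (u t) ^ 2) * h t) t)
    (h0 : |u 0| < R) :
    ∀ t : ℝ, 0 ≤ t → |u t| < R := by
  intro t ht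
  have hR : 0 ≤ R := (abs_nonneg _).trans h0.le
  have hcoeff : ContinuousOn (fun s => -(2 * u s * h s)) (Icc 0 t) := fun s hs =>
    (((hu s hs.1).continuousAt.const_mul 2).mul hcont.continuousAt).neg.continuousWithinAt
  have hw0 : 0 < R ^ 2 - u 0 ^ 2 := by
    rw [sub_pos, ← sq_abs (u 0)]
    exact pow_lt_pow_left₀ h0 (abs_nonneg _) two_ne_zero
  have hwt := pos_of_hasDerivAt_mul_self_of_pos ht hcoeff
    (fun s hs => (hu s hs.1).const_sub_sq_of_confined) hw0
  exact abs_lt_of_sq_lt_sq (sub_pos.mp hwt) hR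

theorem confined_interior_invariance (R : ℝ) (hR : 0 < R)
    (h : ℝ → ℝ) (hcont : Continuous h)
    (u : ℝ → ℝ)
    (hu : ∀ t : ℝ, 0 ≤ t → HasDerivAt u ((R ^ 2 - (u t) ^ 2) * h t) t)
    (h0 : |u 0| < R) :
    ∀ t : ℝ, 0 ≤ t → |u t| < R :=
  confined_interior_invariance_general R h hcont u hu h0
end

section
/- Let Q be a generator matrix on Fin N and let t ≥ 0. Then every entry of the matrix exponential exp(t • Qᵀ) is nonnegative and every column of exp(t • Qᵀ) sums to 1; consequently, for every μ in the probability simplex Δ, the vector exp(t • Qᵀ) *ᵥ μ lies in Δ. -/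
/-! Adding a large scalar `c` to the diagonal of a matrix with nonnegative off-diagonal entries
makes it entrywise nonnegative, so its exponential series is entrywise nonnegative, and the shift
only costs the positive factor `exp (-c)`. Column sums are preserved because `1 ᵥ* (t • Qᵀ) = 0`
annihilates every term of `1 ᵥ* exp (t • Qᵀ) = ∑ₖ 1 ᵥ* (t • Qᵀ) ^ k / k!` except `k = 0`. -/

open Matrix

/-- A generator (transition-rate) matrix: nonnegative off-diagonal entries and zero row sums. -/
def IsGenerator {N : ℕ} (Q : Matrix (Fin N) (Fin N) ℝ) : Prop :=
  (∀ i j, i ≠ j → 0 ≤ Q i j) ∧ (∀ i, ∑ j, Q i j = 0)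

open NormedSpace
open scoped Nat

namespace Matrix

variable {n : Type*} [Fintype n] [DecidableEq n]

theorem hasSum_exp (A : Matrix n n ℝ) : HasSum (fun k : ℕ => (k !⁻¹ : ℝ) • A ^ k) (exp A) := by
  -- `exp` does not depend on the norm; any Banach algebra norm gives the series expansion.
  let := Matrix.linftyOpNormedRing (n := n) (α := ℝ)
  let := Matrix.linftyOpNormedAlgebra (n := n) (R := ℝ) (α := ℝ)
  exact exp_series_hasSum_exp' A

theorem hasSum_exp_apply (A : Matrix n n ℝ) (i j : n) :
    HasSum (fun k : ℕ => (k !⁻¹ : ℝ) * (A ^ k) i j) (exp A i j) :=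
  Pi.hasSum.mp (Pi.hasSum.mp (hasSum_exp A) i) j

theorem exp_apply_nonneg {A : Matrix n n ℝ} (hA : ∀ i j, 0 ≤ A i j) (i j : n) :
    0 ≤ exp A i j := by
  have hpow : ∀ k : ℕ, ∀ i j, 0 ≤ (A ^ k) i j := by
    intro k
    induction k with
    | zero => intro i j; rw [pow_zero, one_apply]; positivity
    | succ k ih =>
      intro i j
      rw [pow_succ, mul_apply]
      exact Finset.sum_nonneg fun l _ => mul_nonneg (ih i l) (hA l j)
  exact (hasSum_exp_apply A i j).nonneg fun k => mul_nonneg (by positivity) (hpow k i j)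

theorem exp_apply_nonneg_of_offDiag_nonneg {A : Matrix n n ℝ} (hA : ∀ i j, i ≠ j → 0 ≤ A i j)
    (i j : n) : 0 ≤ exp A i j := by
  set c : ℝ := ∑ k, |A k k|
  have hshift : ∀ i j, 0 ≤ (A + diagonal (fun _ => c) : Matrix n n ℝ) i j := by
    intro i j
    rcases eq_or_ne i j with rfl | hij
    · have : |A i i| ≤ c := Finset.single_le_sum (fun k _ => abs_nonneg (A k k)) (Finset.mem_univ i)
      simp only [add_apply, diagonal_apply_eq]
      linarith [neg_abs_le (A i i)]
    · simpa [hij] using hA i j hij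
  have hsplit : exp A = exp (A + diagonal fun _ => c) * exp (diagonal fun _ => -c) := by
    rw [← exp_add_of_commute]
    · rw [add_assoc, diagonal_add]
      simp
    · have := (scalar_commute (-c) (fun _ => Commute.all _ _) (A + diagonal fun _ => c)).symm
      simpa using this
  rw [hsplit, exp_diagonal, mul_diagonal]
  exact mul_nonneg (exp_apply_nonneg hshift i j) (by simp [← Real.exp_eq_exp_ℝ, Real.exp_nonneg])

theorem vecMul_exp_of_vecMul_eq_zero {A : Matrix n n ℝ} {v : n → ℝ} (hA : v ᵥ* A = 0) :
    v ᵥ* exp A = v := by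
  have hterm : ∀ k : ℕ, v ᵥ* ((k !⁻¹ : ℝ) • A ^ k) = if k = 0 then v else 0 := by
    rintro (_ | k)
    · simp
    · rw [vecMul_smul, pow_succ', ← vecMul_vecMul, hA, zero_vecMul, smul_zero, if_neg k.succ_ne_zero]
  have hsum := (hasSum_exp A).map (AddMonoidHom.mk' (v ᵥ* ·) fun M M' => vecMul_add M M' v)
    (continuous_const.matrix_vecMul continuous_id)
  simp only [Function.comp_def, AddMonoidHom.mk'_apply, hterm] at hsum
  exact hsum.unique (hasSum_ite_eq 0 v)

end Matrix

theorem IsGenerator.one_vecMul_transpose {N : ℕ} {Q : Matrix (Fin N) (Fin N) ℝ}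
    (hQ : IsGenerator Q) : 1 ᵥ* Qᵀ = 0 := by
  ext i
  simpa [vecMul_transpose, mulVec, dotProduct] using hQ.2 i

theorem IsGenerator.exp_smul_transpose_mem_colStochastic {N : ℕ} {Q : Matrix (Fin N) (Fin N) ℝ}
    (hQ : IsGenerator Q) {t : ℝ} (ht : 0 ≤ t) : exp (t • Qᵀ) ∈ colStochastic ℝ (Fin N) := by
  refine ⟨exp_apply_nonneg_of_offDiag_nonneg fun i j hij => ?_, vecMul_exp_of_vecMul_eq_zero ?_⟩
  · exact mul_nonneg ht (hQ.1 j i hij.symm)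
  · rw [vecMul_smul, hQ.one_vecMul_transpose, smul_zero]

theorem exp_generator_column_stochastic_general {N : ℕ}
    (Q : Matrix (Fin N) (Fin N) ℝ) (hQ : IsGenerator Q) (t : ℝ) (ht : 0 ≤ t) :
    (∀ i j, 0 ≤ NormedSpace.exp (t • Qᵀ) i j) ∧
    (∀ j, ∑ i, NormedSpace.exp (t • Qᵀ) i j = 1) ∧
    (∀ μ ∈ probSimplex N, NormedSpace.exp (t • Qᵀ) *ᵥ μ ∈ probSimplex N) := by
  have hP := hQ.exp_smul_transpose_mem_colStochastic ht
  refine ⟨fun i j => nonneg_of_mem_colStochastic hP, sum_col_of_mem_colStochastic hP, ?_⟩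
  rintro μ ⟨hμ_nonneg, hμ_sum⟩
  exact ⟨nonneg_mulVec_of_mem_colStochastic hP hμ_nonneg,
    (sum_mulVec_of_mem_colStochastic hP).trans hμ_sum⟩

theorem exp_generator_column_stochastic {N : ℕ} (hN : 1 ≤ N)
    (Q : Matrix (Fin N) (Fin N) ℝ) (hQ : IsGenerator Q) (t : ℝ) (ht : 0 ≤ t) :
    (∀ i j, 0 ≤ NormedSpace.exp (t • Qᵀ) i j) ∧
    (∀ j, ∑ i, NormedSpace.exp (t • Qᵀ) i j = 1) ∧
    (∀ μ ∈ probSimplex N, NormedSpace.exp (t • Qᵀ) *ᵥ μ ∈ probSimplex N) :=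
  exp_generator_column_stochastic_general Q hQ t ht
end

section
/- Let Q be a generator matrix on Fin N satisfying the mixing estimate with constants C ≥ 1 and γ > 0. Then for every ξ ∈ Z: (i) the function t ↦ exp(t • Qᵀ) *ᵥ ξ is integrable on [0,∞); (ii) the resolvent R ξ := −∫₀^∞ exp(t • Qᵀ) *ᵥ ξ dt satisfies ‖R ξ‖₁ ≤ (C/γ) * ‖ξ‖₁; and (iii) R (Qᵀ *ᵥ ξ) = ξ, i.e. the resolvent is a left inverse of Qᵀ on Z. -/
open Matrix

/-- The ℓ¹ norm on `Fin N → ℝ`. -/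
def l1norm {N : ℕ} (x : Fin N → ℝ) : ℝ := ∑ i, |x i|

/-- The uniform exponential mixing estimate on the zero-sum subspace. -/
def MixingEstimate {N : ℕ} (Q : Matrix (Fin N) (Fin N) ℝ) (C γ : ℝ) : Prop :=
  ∀ ξ : Fin N → ℝ, (∑ i, ξ i) = 0 → ∀ t : ℝ, 0 ≤ t →
    l1norm (NormedSpace.exp (t • Qᵀ) *ᵥ ξ) ≤ C * Real.exp (-γ * t) * l1norm ξ

/-!
The mixing bound dominates the flow `t ↦ exp (t • Qᵀ) *ᵥ ξ` by `C * l1norm ξ * exp (-γ t)`, which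
gives integrability on `[0, ∞)` and, after integrating, the bound `C / γ`. The flow has derivative
`exp (t • Qᵀ) *ᵥ (Qᵀ *ᵥ ξ)` and tends to `0`, so the fundamental theorem of calculus on `[0, ∞)`
evaluates the integral of that derivative to `0 - ξ`.
-/

open MeasureTheory Set Filter Topology

section L1

variable {N : ℕ}

theorem l1norm_nonneg (x : Fin N → ℝ) : 0 ≤ l1norm x :=
  Finset.sum_nonneg fun _ _ => abs_nonneg _

theorem l1norm_neg (x : Fin N → ℝ) : l1norm (-x) = l1norm x := by
  simp [l1norm]

theorem norm_le_l1norm (x : Fin N → ℝ) : ‖x‖ ≤ l1norm x :=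
  (pi_norm_le_iff_of_nonneg (l1norm_nonneg x)).2 fun i =>
    Finset.single_le_sum (fun j _ => abs_nonneg (x j)) (Finset.mem_univ i)

theorem l1norm_eq_norm_toLp (x : Fin N → ℝ) : l1norm x = ‖WithLp.toLp 1 x‖ := by
  simp [PiLp.norm_eq_of_L1, l1norm]

theorem l1norm_integral_le {α : Type*} [MeasurableSpace α] {μ : Measure α}
    (f : α → Fin N → ℝ) : l1norm (∫ a, f a ∂μ) ≤ ∫ a, l1norm (f a) ∂μ := by
  simp only [l1norm_eq_norm_toLp]
  rw [← PiLp.coe_symm_continuousLinearEquiv 1 ℝ, ← ContinuousLinearEquiv.integral_comp_comm]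
  exact norm_integral_le_integral_norm _

theorem integrable_l1norm {α : Type*} [MeasurableSpace α] {μ : Measure α}
    {f : α → Fin N → ℝ} (hf : Integrable f μ) : Integrable (fun a => l1norm (f a)) μ := by
  simp only [l1norm_eq_norm_toLp]
  exact ((PiLp.continuousLinearEquiv 1 ℝ _).symm.toContinuousLinearMap.integrable_comp hf).norm

end L1

section MatrixFlow

variable {n : Type*} [Fintype n] [DecidableEq n]

-- `NormedSpace.exp` does not depend on the norm; one is needed only to differentiate it.
attribute [local instance] Matrix.linftyOpNormedRing Matrix.linftyOpNormedAlgebra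

theorem hasDerivAt_exp_smul_mulVec (A : Matrix n n ℝ) (v : n → ℝ) (t : ℝ) :
    HasDerivAt (fun t : ℝ => NormedSpace.exp (t • A) *ᵥ v)
      (NormedSpace.exp (t • A) *ᵥ (A *ᵥ v)) t := by
  let mulVecLeft : Matrix n n ℝ →L[ℝ] n → ℝ :=
    LinearMap.toContinuousLinearMap ((LinearMap.applyₗ v).comp Matrix.toLin'.toLinearMap)
  rw [Matrix.mulVec_mulVec]
  exact mulVecLeft.hasFDerivAt.comp_hasDerivAt t (hasDerivAt_exp_smul_const A t)

theorem continuous_exp_smul_mulVec (A : Matrix n n ℝ) (v : n → ℝ) :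
    Continuous fun t : ℝ => NormedSpace.exp (t • A) *ᵥ v :=
  continuous_iff_continuousAt.2 fun t => (hasDerivAt_exp_smul_mulVec A v t).continuousAt

theorem exp_smul_mulVec_mulVec_comm (A : Matrix n n ℝ) (v : n → ℝ) (t : ℝ) :
    NormedSpace.exp (t • A) *ᵥ (A *ᵥ v) = A *ᵥ (NormedSpace.exp (t • A) *ᵥ v) := by
  rw [Matrix.mulVec_mulVec, Matrix.mulVec_mulVec,
    (((Commute.refl A).smul_left t).exp_left).eq]

end MatrixFlow

theorem integrableOn_Ioi_const_mul_exp_neg_mul (c : ℝ) {γ : ℝ} (hγ : 0 < γ) :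
    IntegrableOn (fun t : ℝ => c * Real.exp (-γ * t)) (Ioi 0) :=
  (exp_neg_integrableOn_Ioi 0 hγ).const_mul c

namespace MixingEstimate

variable {N : ℕ} {Q : Matrix (Fin N) (Fin N) ℝ} {C γ : ℝ} {ξ : Fin N → ℝ}

theorem integrableOn_Ioi (hmix : MixingEstimate Q C γ) (hγ : 0 < γ) (hξ : ∑ i, ξ i = 0) :
    IntegrableOn (fun t : ℝ => NormedSpace.exp (t • Qᵀ) *ᵥ ξ) (Ioi 0) := by
  refine Integrable.mono' (integrableOn_Ioi_const_mul_exp_neg_mul (C * l1norm ξ) hγ)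
    (continuous_exp_smul_mulVec Qᵀ ξ).aestronglyMeasurable ?_
  refine (ae_restrict_iff' measurableSet_Ioi).2 (ae_of_all _ fun t ht => ?_)
  calc ‖NormedSpace.exp (t • Qᵀ) *ᵥ ξ‖ ≤ C * Real.exp (-γ * t) * l1norm ξ :=
        (norm_le_l1norm _).trans (hmix ξ hξ t (le_of_lt ht))
    _ = C * l1norm ξ * Real.exp (-γ * t) := by ring

theorem tendsto_atTop (hmix : MixingEstimate Q C γ) (hγ : 0 < γ) (hξ : ∑ i, ξ i = 0) :
    Tendsto (fun t : ℝ => NormedSpace.exp (t • Qᵀ) *ᵥ ξ) atTop (𝓝 0) := by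
  refine squeeze_zero_norm' ?_ (a := fun t => C * Real.exp (-γ * t) * l1norm ξ) ?_
  · filter_upwards [eventually_ge_atTop 0] with t ht
    exact (norm_le_l1norm _).trans (hmix ξ hξ t ht)
  · have hexp : Tendsto (fun t : ℝ => Real.exp (-γ * t)) atTop (𝓝 0) :=
      Real.tendsto_exp_atBot.comp (tendsto_id.const_mul_atTop_of_neg (neg_neg_of_pos hγ))
    simpa using (hexp.const_mul C).mul_const (l1norm ξ)

theorem integral_l1norm_le (hmix : MixingEstimate Q C γ) (hγ : 0 < γ) (hξ : ∑ i, ξ i = 0) :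
    ∫ t in Ioi (0 : ℝ), l1norm (NormedSpace.exp (t • Qᵀ) *ᵥ ξ) ≤ C / γ * l1norm ξ := by
  have hbound : ∫ t in Ioi (0 : ℝ), C * l1norm ξ * Real.exp (-γ * t) = C / γ * l1norm ξ := by
    rw [integral_const_mul, integral_exp_mul_Ioi (neg_neg_of_pos hγ), mul_zero,
      Real.exp_zero, neg_div_neg_eq]
    ring
  rw [← hbound]
  exact setIntegral_mono_on (integrable_l1norm (hmix.integrableOn_Ioi hγ hξ))
    (integrableOn_Ioi_const_mul_exp_neg_mul _ hγ) measurableSet_Ioi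
    fun t ht => (hmix ξ hξ t (le_of_lt ht)).trans_eq (by ring)

end MixingEstimate

theorem resolvent_estimates_general {N : ℕ}
    (Q : Matrix (Fin N) (Fin N) ℝ)
    (C γ : ℝ) (hγ : 0 < γ) (hmix : MixingEstimate Q C γ)
    (ξ : Fin N → ℝ) (hξ : (∑ i, ξ i) = 0) :
    MeasureTheory.IntegrableOn (fun t : ℝ => NormedSpace.exp (t • Qᵀ) *ᵥ ξ) (Set.Ici 0) ∧
    l1norm (-∫ t in Set.Ici (0 : ℝ), NormedSpace.exp (t • Qᵀ) *ᵥ ξ) ≤ C / γ * l1norm ξ ∧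
    (-∫ t in Set.Ici (0 : ℝ), NormedSpace.exp (t • Qᵀ) *ᵥ (Qᵀ *ᵥ ξ)) = ξ := by
  have hint := hmix.integrableOn_Ioi hγ hξ
  refine ⟨by rwa [integrableOn_Ici_iff_integrableOn_Ioi], ?_, ?_⟩
  · rw [integral_Ici_eq_integral_Ioi, l1norm_neg]
    exact (l1norm_integral_le _).trans (hmix.integral_l1norm_le hγ hξ)
  · have hderiv_int :
        IntegrableOn (fun t : ℝ => NormedSpace.exp (t • Qᵀ) *ᵥ (Qᵀ *ᵥ ξ)) (Ioi 0) := by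
      simp_rw [exp_smul_mulVec_mulVec_comm]
      exact (LinearMap.toContinuousLinearMap (Matrix.mulVecLin Qᵀ)).integrable_comp hint
    rw [integral_Ici_eq_integral_Ioi, integral_Ioi_of_hasDerivAt_of_tendsto'
      (fun t _ => hasDerivAt_exp_smul_mulVec Qᵀ ξ t) hderiv_int (hmix.tendsto_atTop hγ hξ)]
    simp

theorem resolvent_estimates {N : ℕ} (hN : 1 ≤ N)
    (Q : Matrix (Fin N) (Fin N) ℝ) (hQ : IsGenerator Q)
    (C γ : ℝ) (hC : 1 ≤ C) (hγ : 0 < γ) (hmix : MixingEstimate Q C γ)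
    (ξ : Fin N → ℝ) (hξ : (∑ i, ξ i) = 0) :
    MeasureTheory.IntegrableOn (fun t : ℝ => NormedSpace.exp (t • Qᵀ) *ᵥ ξ) (Set.Ici 0) ∧
    l1norm (-∫ t in Set.Ici (0 : ℝ), NormedSpace.exp (t • Qᵀ) *ᵥ ξ) ≤ C / γ * l1norm ξ ∧
    (-∫ t in Set.Ici (0 : ℝ), NormedSpace.exp (t • Qᵀ) *ᵥ (Qᵀ *ᵥ ξ)) = ξ :=
  resolvent_estimates_general Q C γ hγ hmix ξ hξ
end

section
/- Let P : Matrix (Fin N) (Fin N) ℝ be column-stochastic (all entries nonnegative, every column sums to 1), let k⋆ : Fin N, and let 0 ≤ α < 1 be such that P k⋆ j ≥ α for every j (each column of P dominates α times the standard basis vector e_{k⋆}). Then for every ξ in the zero-sum subspace Z, ‖P *ᵥ ξ‖₁ ≤ (1 − α) * ‖ξ‖₁. -/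
open Matrix

theorem doeblin_contraction {N : ℕ} (hN : 1 ≤ N)
    (P : Matrix (Fin N) (Fin N) ℝ)
    (hpos : ∀ i j, 0 ≤ P i j) (hcol : ∀ j, ∑ i, P i j = 1)
    (kstar : Fin N) (α : ℝ) (hα0 : 0 ≤ α) (hα1 : α < 1)
    (hmin : ∀ j, α ≤ P kstar j)
    (ξ : Fin N → ℝ) (hξ : (∑ i, ξ i) = 0) :
    l1norm (P *ᵥ ξ) ≤ (1 - α) * l1norm ξ := by
  set Q : Matrix (Fin N) (Fin N) ℝ :=
    fun i j => P i j - α * (if i = kstar then 1 else 0) with hQ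
  have hQpos : ∀ i j, 0 ≤ Q i j := by
    intro i j
    by_cases h : i = kstar <;> simp [hQ, h]
    · linarith [hmin j]
    · exact hpos i j
  have hQcol : ∀ j, ∑ i, Q i j = 1 - α := by
    intro j
    simp [hQ, Finset.sum_sub_distrib, hcol j, mul_ite, mul_one, mul_zero, Finset.sum_ite_eq]
  have hrow : ∀ i, (P *ᵥ ξ) i = ∑ j, Q i j * ξ j := by
    intro i
    simp only [mulVec, dotProduct, hQ, sub_mul, Finset.sum_sub_distrib]
    have : ∑ j, α * (if i = kstar then 1 else 0) * ξ j
        = α * (if i = kstar then 1 else 0) * ∑ j, ξ j := by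
      rw [Finset.mul_sum]
    rw [this, hξ, mul_zero, sub_zero]
  calc l1norm (P *ᵥ ξ) = ∑ i, |∑ j, Q i j * ξ j| := by
        unfold l1norm; exact Finset.sum_congr rfl fun i _ => by rw [hrow i]
    _ ≤ ∑ i, ∑ j, Q i j * |ξ j| := by
        refine Finset.sum_le_sum fun i _ => ?_
        refine (Finset.abs_sum_le_sum_abs _ _).trans ?_
        refine Finset.sum_le_sum fun j _ => ?_
        rw [abs_mul, abs_of_nonneg (hQpos i j)]
    _ = ∑ j, (∑ i, Q i j) * |ξ j| := by
        rw [Finset.sum_comm]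
        exact Finset.sum_congr rfl fun j _ => (Finset.sum_mul ..).symm
    _ = (1 - α) * l1norm ξ := by
        unfold l1norm; rw [Finset.mul_sum]
        exact Finset.sum_congr rfl fun j _ => by rw [hQcol j]
end

section
/- Let Q be a generator matrix on Fin N, let k⋆ : Fin N, and let q⋆ > 0 and q̄ > 0 satisfy Q i k⋆ ≥ q⋆ for every i ≠ k⋆ and ∑_{j ≠ i} Q i j ≤ q̄ for every i. Then every entry of row k⋆ of the matrix exponential exp((1/q⋆) • Qᵀ) is at least exp(−q̄/q⋆): for every j, (exp((1/q⋆) • Qᵀ)) k⋆ j ≥ exp(−q̄/q⋆). -/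
open Matrix

namespace Matrix

variable {ι : Type*} [Fintype ι] [DecidableEq ι]

theorem exp_smul_one (a : ℝ) : NormedSpace.exp (a • (1 : Matrix ι ι ℝ)) = Real.exp a • 1 := by
  rw [← diagonal_one, ← diagonal_smul, exp_diagonal, Pi.exp_def, ← diagonal_smul,
    Real.exp_eq_exp_ℝ]
  congr 1; ext; simp

theorem exp_sub_smul_one (A : Matrix ι ι ℝ) (a : ℝ) :
    NormedSpace.exp (A - a • 1) = Real.exp (-a) • NormedSpace.exp A := by
  rw [sub_eq_add_neg, ← neg_smul, exp_add_of_commute _ _ ((Commute.one_right A).smul_right _),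
    exp_smul_one, mul_smul_one]

theorem one_add_apply_le_exp_apply {M : Matrix ι ι ℝ} (hM : ∀ i j, 0 ≤ M i j) (i j : ι) :
    (1 + M) i j ≤ NormedSpace.exp M i j := by
  -- any submultiplicative norm makes the exponential series converge
  let _ := Matrix.linftyOpNormedRing (n := ι) (α := ℝ)
  let _ := Matrix.linftyOpNormedAlgebra (n := ι) (R := ℝ) (α := ℝ)
  have hexp := Pi.hasSum.1 (Pi.hasSum.1 (NormedSpace.exp_series_hasSum_exp' (𝕂 := ℝ) M) i) j
  calc (1 + M) i j = ∑ n ∈ Finset.range 2, ((n.factorial : ℝ)⁻¹ • M ^ n) i j := by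
        simp [Finset.sum_range_succ]
    _ ≤ _ := sum_le_hasSum _ (fun n _ => mul_nonneg (by positivity) (pow_apply_nonneg hM n i j))
        hexp

end Matrix

namespace IsGenerator

variable {N : ℕ} {Q : Matrix (Fin N) (Fin N) ℝ}

theorem diag_eq_neg_sum_erase (hQ : IsGenerator Q) (i : Fin N) :
    Q i i = -∑ j ∈ Finset.univ.erase i, Q i j := by
  rw [eq_neg_iff_add_eq_zero, Finset.add_sum_erase _ _ (Finset.mem_univ i), hQ.2 i]

theorem add_smul_one_apply_nonneg (hQ : IsGenerator Q) {qbar : ℝ}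
    (hrate : ∀ i, ∑ j ∈ Finset.univ.erase i, Q i j ≤ qbar) (i j : Fin N) :
    0 ≤ (Q + qbar • 1) i j := by
  rcases eq_or_ne i j with rfl | hij
  · simp only [Matrix.add_apply, Matrix.smul_apply, one_apply_eq, smul_eq_mul, mul_one,
      hQ.diag_eq_neg_sum_erase]
    linarith [hrate i]
  · simpa [one_apply_ne hij] using hQ.1 i j hij

end IsGenerator

theorem minorization_exp_row_bound_general {N : ℕ}
    (Q : Matrix (Fin N) (Fin N) ℝ) (hQ : IsGenerator Q)
    (kstar : Fin N) (qstar qbar : ℝ) (hqstar : 0 < qstar)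
    (hmin : ∀ i, i ≠ kstar → qstar ≤ Q i kstar)
    (hrate : ∀ i, ∑ j ∈ Finset.univ.erase i, Q i j ≤ qbar) :
    ∀ j, Real.exp (-qbar / qstar) ≤ NormedSpace.exp ((1 / qstar) • Qᵀ) kstar j := by
  intro j
  set B := (1 / qstar) • (Q + qbar • 1)
  have hB : ∀ i j, 0 ≤ B i j := fun i j =>
    mul_nonneg (by positivity) (hQ.add_smul_one_apply_nonneg hrate i j)
  have hshift : (1 / qstar) • Q = B - (qbar / qstar) • 1 := by
    simp only [B]
    module
  have hone : 1 ≤ (1 + B) j kstar := by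
    rcases eq_or_ne j kstar with rfl | hj
    · simpa using hB j j
    · simpa [B, one_apply_ne hj, le_inv_mul_iff₀ hqstar] using hmin j hj
  calc Real.exp (-qbar / qstar) = Real.exp (-(qbar / qstar)) * 1 := by rw [neg_div, mul_one]
    _ ≤ Real.exp (-(qbar / qstar)) * NormedSpace.exp B j kstar := by
        gcongr
        exact hone.trans (one_add_apply_le_exp_apply hB j kstar)
    _ = NormedSpace.exp ((1 / qstar) • Qᵀ) kstar j := by
        rw [← transpose_smul, exp_transpose, transpose_apply, hshift, exp_sub_smul_one]
        rfl

theorem minorization_exp_row_bound {N : ℕ} (hN : 1 ≤ N)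
    (Q : Matrix (Fin N) (Fin N) ℝ) (hQ : IsGenerator Q)
    (kstar : Fin N) (qstar qbar : ℝ) (hqstar : 0 < qstar) (hqbar : 0 < qbar)
    (hmin : ∀ i, i ≠ kstar → qstar ≤ Q i kstar)
    (hrate : ∀ i, ∑ j ∈ Finset.univ.erase i, Q i j ≤ qbar) :
    ∀ j, Real.exp (-qbar / qstar) ≤ NormedSpace.exp ((1 / qstar) • Qᵀ) kstar j :=
  minorization_exp_row_bound_general Q hQ kstar qstar qbar hqstar hmin hrate
end

section
/- Let δ > 0, let Q : ℝ → Matrix (Fin N) (Fin N) ℝ be continuous with Q t a generator matrix for every t ≥ 0, and let μ : ℝ → (Fin N → ℝ) satisfy HasDerivAt μ (δ⁻¹ • ((Q t)ᵀ *ᵥ μ t)) t for all t ≥ 0. If μ 0 lies in the probability simplex Δ, then μ t ∈ Δ for all t ≥ 0: every component stays nonnegative and the total mass ∑ i, μ i t stays equal to 1. -/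
open Matrix

/-!
Mass is conserved because the columns of `Qᵀ` sum to zero. For positivity, fix `T`: on `[0, T]`
the entries of `A t = δ⁻¹ • (Q t)ᵀ` are bounded by some `K`, so `ν t = exp (K t) • μ t` solves
`ν' = (A t + K • 1) *ᵥ ν` with an entrywise nonnegative matrix whose row sums are bounded by some
`M`. Starting from a uniform bound `-C ≤ ν`, comparing `ν` with the integral of the previous lower
bound gives `-C (M t)ⁿ / n! ≤ ν t` for every `n`, and letting `n → ∞` gives `0 ≤ ν`.
-/

open Set Filter Topology Nat

section NonnegCoefficients

variable {ι : Type*} [Fintype ι]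

lemma neg_mul_le_mulVec_apply {B : Matrix ι ι ℝ} {v : ι → ℝ} {M g : ℝ} {i : ι}
    (hB : ∀ j, 0 ≤ B i j) (hrow : ∑ j, B i j ≤ M) (hg : 0 ≤ g) (hv : ∀ j, -g ≤ v j) :
    -(M * g) ≤ (B *ᵥ v) i :=
  calc -(M * g) ≤ (∑ j, B i j) * -g := by linarith [mul_le_mul_of_nonneg_right hrow hg]
    _ = ∑ j, B i j * -g := Finset.sum_mul ..
    _ ≤ ∑ j, B i j * v j := Finset.sum_le_sum fun j _ => mul_le_mul_of_nonneg_left (hv j) (hB j)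

lemma hasDerivAt_mul_pow_succ_div_factorial (M : ℝ) (n : ℕ) (t : ℝ) :
    HasDerivAt (fun s => (M * s) ^ (n + 1) / (n + 1)!) (M * ((M * t) ^ n / n !)) t := by
  refine ((((hasDerivAt_id t).const_mul M).pow (n + 1)).div_const ((n + 1)! : ℝ)).congr_deriv ?_
  rw [Nat.factorial_succ]
  push_cast
  field_simp
  rw [id, mul_pow]

theorem neg_mul_pow_div_factorial_le_of_hasDerivAt_mulVec {B : ℝ → Matrix ι ι ℝ}
    {ν : ℝ → ι → ℝ} {T M C : ℝ} (hM : 0 ≤ M) (hC : 0 ≤ C)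
    (hB : ∀ t ∈ Icc 0 T, ∀ i j, 0 ≤ B t i j) (hrow : ∀ t ∈ Icc 0 T, ∀ i, ∑ j, B t i j ≤ M)
    (hν : ∀ t ∈ Icc 0 T, HasDerivAt ν (B t *ᵥ ν t) t) (h0 : 0 ≤ ν 0)
    (hνC : ∀ t ∈ Icc 0 T, ∀ i, -C ≤ ν t i) (n : ℕ) :
    ∀ t ∈ Icc 0 T, ∀ i, -(C * ((M * t) ^ n / n !)) ≤ ν t i := by
  induction n with
  | zero => simpa using hνC
  | succ n ih =>
    intro t ht i
    have hsub : Icc 0 t ⊆ Icc 0 T := Icc_subset_Icc_right ht.2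
    have hνi : ∀ s ∈ Icc 0 t, HasDerivAt (fun s => ν s i) ((B s *ᵥ ν s) i) s :=
      fun s hs => hasDerivAt_pi.1 (hν s (hsub hs)) i
    have hlow (s : ℝ) : HasDerivAt (fun s => -(C * ((M * s) ^ (n + 1) / (n + 1)!)))
        (-(C * (M * ((M * s) ^ n / n !)))) s :=
      ((hasDerivAt_mul_pow_succ_div_factorial M n s).const_mul C).neg
    refine image_le_of_deriv_right_le_deriv_boundary
      (fun s _ => (hlow s).continuousAt.continuousWithinAt)
      (fun s _ => (hlow s).hasDerivWithinAt) (by simpa using h0 i)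
      (fun s hs => (hνi s hs).continuousAt.continuousWithinAt)
      (fun s hs => (hνi s (Ico_subset_Icc_self hs)).hasDerivWithinAt)
      (fun s hs => ?_) ⟨ht.1, le_rfl⟩
    have hs' := hsub (Ico_subset_Icc_self hs)
    have hg : 0 ≤ C * ((M * s) ^ n / n !) := by have := hs'.1; positivity
    simpa only [mul_left_comm C M] using
      neg_mul_le_mulVec_apply (hB s hs' i) (hrow s hs' i) hg (ih s hs')

theorem nonneg_of_hasDerivAt_mulVec_of_apply_nonneg {B : ℝ → Matrix ι ι ℝ} {ν : ℝ → ι → ℝ}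
    {T M : ℝ} (hB : ∀ t ∈ Icc 0 T, ∀ i j, 0 ≤ B t i j)
    (hrow : ∀ t ∈ Icc 0 T, ∀ i, ∑ j, B t i j ≤ M)
    (hν : ∀ t ∈ Icc 0 T, HasDerivAt ν (B t *ᵥ ν t) t) (h0 : 0 ≤ ν 0) :
    ∀ t ∈ Icc 0 T, 0 ≤ ν t := by
  obtain ⟨C, hC⟩ := isCompact_Icc.exists_bound_of_continuousOn
    fun t ht => (hν t ht).continuousAt.continuousWithinAt
  have hνC : ∀ t ∈ Icc 0 T, ∀ i, -C ≤ ν t i := fun t ht i =>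
    neg_le_of_abs_le ((norm_le_pi_norm (ν t) i).trans (hC t ht))
  intro t ht i
  have hM : ∀ t ∈ Icc 0 T, ∀ i, ∑ j, B t i j ≤ max M 0 :=
    fun t ht i => (hrow t ht i).trans (le_max_left M 0)
  have hbound := neg_mul_pow_div_factorial_le_of_hasDerivAt_mulVec (le_max_right M 0)
    ((norm_nonneg _).trans (hC t ht)) hB hM hν h0 hνC
  have hlim : Tendsto (fun n => -(C * ((max M 0 * t) ^ n / n !))) atTop (𝓝 0) := by
    simpa using ((FloorSemiring.tendsto_pow_div_factorial_atTop (max M 0 * t)).const_mul C).neg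
  exact le_of_tendsto' hlim fun n => hbound n t ht i

end NonnegCoefficients

section Metzler

variable {ι : Type*} [DecidableEq ι]

lemma add_smul_one_apply_nonneg {A : Matrix ι ι ℝ} {K : ℝ} (hoff : ∀ i j, i ≠ j → 0 ≤ A i j)
    (hK : ∀ i j, |A i j| ≤ K) (i j : ι) : 0 ≤ (A + K • 1) i j := by
  rcases eq_or_ne i j with rfl | hij
  · simpa [neg_le_iff_add_nonneg] using neg_le_of_abs_le (hK i i)
  · simpa [hij] using hoff i j hij

variable [Fintype ι]

lemma sum_add_smul_one_apply_le {A : Matrix ι ι ℝ} {K : ℝ} (hK : ∀ i j, |A i j| ≤ K) (i : ι) :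
    ∑ j, (A + K • 1) i j ≤ (Fintype.card ι + 1) * K := by
  have hsum : ∑ j, A i j ≤ Fintype.card ι * K := by
    simpa using Finset.sum_le_sum fun j (_ : j ∈ Finset.univ) => (le_abs_self _).trans (hK i j)
  simp only [Matrix.add_apply, Matrix.smul_apply, smul_eq_mul, Finset.sum_add_distrib, one_apply,
    mul_ite, mul_one, mul_zero, Finset.sum_ite_eq, Finset.mem_univ, if_true]
  linarith

lemma hasDerivAt_exp_smul_of_hasDerivAt_mulVec {A : Matrix ι ι ℝ} {ν : ℝ → ι → ℝ} {c t : ℝ}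
    (hν : HasDerivAt ν (A *ᵥ ν t) t) :
    HasDerivAt (fun s => Real.exp (c * s) • ν s) ((A + c • 1) *ᵥ (Real.exp (c * t) • ν t)) t := by
  have hexp : HasDerivAt (fun s => Real.exp (c * s)) (Real.exp (c * t) * c) t := by
    simpa using ((hasDerivAt_id t).const_mul c).exp
  refine (hexp.smul hν).congr_deriv ?_
  rw [add_mulVec, smul_mulVec, one_mulVec, mulVec_smul, smul_comm, mul_smul]

theorem nonneg_of_hasDerivAt_mulVec_of_offDiag_nonneg {A : ℝ → Matrix ι ι ℝ} {ν : ℝ → ι → ℝ}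
    {T K : ℝ} (hoff : ∀ t ∈ Icc 0 T, ∀ i j, i ≠ j → 0 ≤ A t i j)
    (hK : ∀ t ∈ Icc 0 T, ∀ i j, |A t i j| ≤ K)
    (hν : ∀ t ∈ Icc 0 T, HasDerivAt ν (A t *ᵥ ν t) t) (h0 : 0 ≤ ν 0) :
    ∀ t ∈ Icc 0 T, 0 ≤ ν t := by
  have hshift := nonneg_of_hasDerivAt_mulVec_of_apply_nonneg (ν := fun s => Real.exp (K * s) • ν s)
    (fun t ht => add_smul_one_apply_nonneg (hoff t ht) (hK t ht))
    (fun t ht => sum_add_smul_one_apply_le (hK t ht))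
    (fun t ht => hasDerivAt_exp_smul_of_hasDerivAt_mulVec (hν t ht)) (by simpa using h0)
  exact fun t ht => (smul_nonneg_iff_nonneg_of_pos_left (Real.exp_pos _)).1 (hshift t ht)

end Metzler

open scoped Matrix.Norms.Elementwise in
theorem IsCompact.exists_forall_abs_apply_le {X m n : Type*} [TopologicalSpace X]
    [Fintype m] [Fintype n] {s : Set X} (hs : IsCompact s) {A : X → Matrix m n ℝ}
    (hA : ContinuousOn A s) : ∃ K, ∀ x ∈ s, ∀ i j, |A x i j| ≤ K := by
  obtain ⟨K, hK⟩ := hs.exists_bound_of_continuousOn hA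
  exact ⟨K, fun x hx i j => (norm_entry_le_entrywise_sup_norm (A x)).trans (hK x hx)⟩

theorem sum_apply_eq_of_hasDerivAt {ι : Type*} [Fintype ι] {μ μ' : ℝ → ι → ℝ} {a b : ℝ}
    (hμ : ∀ t ∈ Icc a b, HasDerivAt μ (μ' t) t) (hμ' : ∀ t ∈ Icc a b, ∑ i, μ' t i = 0) :
    ∀ t ∈ Icc a b, ∑ i, μ t i = ∑ i, μ a i := by
  have hsum : ∀ t ∈ Icc a b, HasDerivAt (fun s => ∑ i, μ s i) 0 t := fun t ht => by
    simpa [hμ' t ht] using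
      HasDerivAt.fun_sum (u := Finset.univ) fun i _ => hasDerivAt_pi.1 (hμ t ht) i
  exact constant_of_has_deriv_right_zero (fun t ht => (hsum t ht).continuousAt.continuousWithinAt)
    fun t ht => (hsum t (Ico_subset_Icc_self ht)).hasDerivWithinAt

theorem IsGenerator.sum_transpose_mulVec {N : ℕ} {Q : Matrix (Fin N) (Fin N) ℝ}
    (hQ : IsGenerator Q) (v : Fin N → ℝ) : ∑ i, (Qᵀ *ᵥ v) i = 0 := by
  have hQ1 : Q *ᵥ 1 = 0 := funext fun i => by simpa [mulVec, dotProduct] using hQ.2 i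
  simpa [dotProduct, hQ1, mulVec_transpose] using (dotProduct_mulVec v Q 1).symm

theorem simplex_invariance_general {N : ℕ} (δ : ℝ) (hδ : 0 < δ)
    (Q : ℝ → Matrix (Fin N) (Fin N) ℝ) (hQcont : Continuous Q)
    (hQgen : ∀ t : ℝ, 0 ≤ t → IsGenerator (Q t))
    (μ : ℝ → (Fin N → ℝ))
    (hμ : ∀ t : ℝ, 0 ≤ t → HasDerivAt μ (δ⁻¹ • ((Q t)ᵀ *ᵥ μ t)) t)
    (h0 : μ 0 ∈ probSimplex N) :
    ∀ t : ℝ, 0 ≤ t → μ t ∈ probSimplex N := by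
  intro T hT
  have hT' : T ∈ Icc 0 T := ⟨hT, le_rfl⟩
  have hμ' : ∀ t ∈ Icc 0 T, HasDerivAt μ ((δ⁻¹ • (Q t)ᵀ) *ᵥ μ t) t := fun t ht => by
    simpa only [smul_mulVec] using hμ t ht.1
  have hoff : ∀ t ∈ Icc 0 T, ∀ i j, i ≠ j → 0 ≤ (δ⁻¹ • (Q t)ᵀ) i j := fun t ht i j hij =>
    mul_nonneg (inv_nonneg.2 hδ.le) ((hQgen t ht.1).1 j i hij.symm)
  obtain ⟨K, hK⟩ := isCompact_Icc.exists_forall_abs_apply_le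
    (hQcont.matrix_transpose.const_smul δ⁻¹).continuousOn
  refine ⟨nonneg_of_hasDerivAt_mulVec_of_offDiag_nonneg hoff hK hμ' h0.1 T hT', ?_⟩
  rw [sum_apply_eq_of_hasDerivAt hμ' (fun t ht => ?_) T hT', h0.2]
  simp only [smul_mulVec, Pi.smul_apply, smul_eq_mul, ← Finset.mul_sum,
    (hQgen t ht.1).sum_transpose_mulVec, mul_zero]

theorem simplex_invariance {N : ℕ} (hN : 1 ≤ N) (δ : ℝ) (hδ : 0 < δ)
    (Q : ℝ → Matrix (Fin N) (Fin N) ℝ) (hQcont : Continuous Q)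
    (hQgen : ∀ t : ℝ, 0 ≤ t → IsGenerator (Q t))
    (μ : ℝ → (Fin N → ℝ))
    (hμ : ∀ t : ℝ, 0 ≤ t → HasDerivAt μ (δ⁻¹ • ((Q t)ᵀ *ᵥ μ t)) t)
    (h0 : μ 0 ∈ probSimplex N) :
    ∀ t : ℝ, 0 ≤ t → μ t ∈ probSimplex N :=
  simplex_invariance_general δ hδ Q hQcont hQgen μ hμ h0
end

section
/- Let θ : ℝ → ℝ^d and μ : ℝ → (Fin N → ℝ) be functions with μ t ∈ Δ for all t ≥ 0, let w : ℝ → ℝ^m satisfy HasDerivAt w (b(θ t, μ t) − A(θ t, μ t) (w t)) t for all t ≥ 0, and set R_w := max 1 (2 * B_b / λ_c). Let M ≥ 0 with ‖w 0‖ ≤ M, and let T ≥ 0 satisfy exp(−λ_c * T) * M² ≤ R_w² − B_b²/λ_c². Then ‖w t‖ ≤ R_w for all t ≥ T. -/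
open scoped BigOperators RealInnerProductSpace

lemma softmax_nonneg {N K d : ℕ} (τ : ℝ)
    (ψ : Fin N → Fin K → EuclideanSpace ℝ (Fin d))
    (θ : EuclideanSpace ℝ (Fin d)) (i : Fin N) (a : Fin K) :
    0 ≤ softmaxPolicy τ ψ θ i a :=
  div_nonneg (Real.exp_nonneg _) (Finset.sum_nonneg fun _ _ => Real.exp_nonneg _)

lemma softmax_sum_one {N K d : ℕ} (hK : 1 ≤ K) (τ : ℝ)
    (ψ : Fin N → Fin K → EuclideanSpace ℝ (Fin d))
    (θ : EuclideanSpace ℝ (Fin d)) (i : Fin N) :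
    ∑ a, softmaxPolicy τ ψ θ i a = 1 := by
  haveI : Nonempty (Fin K) := ⟨⟨0, hK⟩⟩
  unfold softmaxPolicy
  rw [← Finset.sum_div]
  exact div_self (ne_of_gt (Finset.sum_pos (fun b _ => Real.exp_pos _) Finset.univ_nonempty))

lemma occ_sum_one {N K d : ℕ} (hK : 1 ≤ K) (τ : ℝ)
    (ψ : Fin N → Fin K → EuclideanSpace ℝ (Fin d))
    (θ : EuclideanSpace ℝ (Fin d)) {μ : Fin N → ℝ} (hμ : μ ∈ probSimplex N) :
    ∑ i, ∑ a, occupancy τ ψ θ μ i a = 1 := by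
  unfold occupancy
  simp only [← Finset.mul_sum, softmax_sum_one hK, mul_one]
  exact hμ.2

lemma inner_drift_le {N K d m : ℕ} (hK : 1 ≤ K) (τ lamc Bb : ℝ)
    (r : Fin N → Fin K → ℝ)
    (ψ : Fin N → Fin K → EuclideanSpace ℝ (Fin d))
    (φ : Fin N → Fin K → EuclideanSpace ℝ (Fin m))
    (θ : EuclideanSpace ℝ (Fin d)) {μ : Fin N → ℝ} (hμ : μ ∈ probSimplex N)
    (hterm : ∀ i a, |r i a| * ‖φ i a‖ ≤ Bb)
    (v : EuclideanSpace ℝ (Fin m)) :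
    ⟪v, criticb τ r ψ φ θ μ - criticA τ lamc ψ φ θ μ v⟫ ≤ Bb * ‖v‖ - lamc * ‖v‖ ^ 2 := by
  have hocc : ∀ i a, 0 ≤ occupancy τ ψ θ μ i a :=
    fun i a => mul_nonneg (hμ.1 i) (softmax_nonneg τ ψ θ i a)
  rw [inner_sub_right]
  have hb : ⟪v, criticb τ r ψ φ θ μ⟫ ≤ Bb * ‖v‖ := by
    unfold criticb
    rw [inner_sum]
    calc ∑ i, ⟪v, ∑ a, occupancy τ ψ θ μ i a • r i a • φ i a⟫
        = ∑ i, ∑ a, occupancy τ ψ θ μ i a * (r i a * ⟪v, φ i a⟫) := by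
          refine Finset.sum_congr rfl fun i _ => ?_
          rw [inner_sum]
          exact Finset.sum_congr rfl fun a _ => by
            rw [real_inner_smul_right, real_inner_smul_right]
      _ ≤ ∑ i, ∑ a, occupancy τ ψ θ μ i a * (Bb * ‖v‖) := by
          refine Finset.sum_le_sum fun i _ => Finset.sum_le_sum fun a _ => ?_
          refine mul_le_mul_of_nonneg_left ?_ (hocc i a)
          calc r i a * ⟪v, φ i a⟫ ≤ |r i a * ⟪v, φ i a⟫| := le_abs_self _
            _ = |r i a| * |⟪v, φ i a⟫| := abs_mul _ _
            _ ≤ |r i a| * (‖v‖ * ‖φ i a‖) :=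
                mul_le_mul_of_nonneg_left (abs_real_inner_le_norm _ _) (abs_nonneg _)
            _ = |r i a| * ‖φ i a‖ * ‖v‖ := by ring
            _ ≤ Bb * ‖v‖ := mul_le_mul_of_nonneg_right (hterm i a) (norm_nonneg _)
      _ = (∑ i, ∑ a, occupancy τ ψ θ μ i a) * (Bb * ‖v‖) := by
          rw [Finset.sum_mul]
          exact Finset.sum_congr rfl fun i _ => (Finset.sum_mul _ _ _).symm
      _ = Bb * ‖v‖ := by rw [occ_sum_one hK τ ψ θ hμ, one_mul]
  have hA : lamc * ‖v‖ ^ 2 ≤ ⟪v, criticA τ lamc ψ φ θ μ v⟫ := by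
    unfold criticA
    rw [inner_add_right, real_inner_smul_right, real_inner_self_eq_norm_sq]
    have : 0 ≤ ⟪v, ∑ i, ∑ a, occupancy τ ψ θ μ i a • ⟪φ i a, v⟫ • φ i a⟫ := by
      rw [inner_sum]
      refine Finset.sum_nonneg fun i _ => ?_
      rw [inner_sum]
      refine Finset.sum_nonneg fun a _ => ?_
      rw [real_inner_smul_right, real_inner_smul_right, real_inner_comm]
      exact mul_nonneg (hocc i a) (mul_self_nonneg _)
    linarith
  linarith

theorem critic_absorbing {N K d m : ℕ}
    (hN : 1 ≤ N) (hK : 1 ≤ K) (hd : 1 ≤ d) (hm : 1 ≤ m)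
    (τ lamc : ℝ) (hτ : 0 < τ) (hlam : 0 < lamc)
    (r : Fin N → Fin K → ℝ)
    (ψ : Fin N → Fin K → EuclideanSpace ℝ (Fin d))
    (φ : Fin N → Fin K → EuclideanSpace ℝ (Fin m))
    (θ : ℝ → EuclideanSpace ℝ (Fin d)) (μ : ℝ → (Fin N → ℝ))
    (hμ : ∀ t : ℝ, 0 ≤ t → μ t ∈ probSimplex N)
    (w : ℝ → EuclideanSpace ℝ (Fin m))
    (hw : ∀ t : ℝ, 0 ≤ t →
      HasDerivAt w (criticb τ r ψ φ (θ t) (μ t) - criticA τ lamc ψ φ (θ t) (μ t) (w t)) t)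
    (Bb Rw : ℝ)
    (hBb : Bb = (maxOver hN hK fun i a => |r i a|) * (maxOver hN hK fun i a => ‖φ i a‖))
    (hRw : Rw = max 1 (2 * Bb / lamc))
    (M : ℝ) (hM : 0 ≤ M) (hw0 : ‖w 0‖ ≤ M)
    (T : ℝ) (hT : 0 ≤ T)
    (hTabs : Real.exp (-lamc * T) * M ^ 2 ≤ Rw ^ 2 - Bb ^ 2 / lamc ^ 2) :
    ∀ t : ℝ, T ≤ t → ‖w t‖ ≤ Rw := by
  -- basic facts about Bb
  have hterm : ∀ i a, |r i a| * ‖φ i a‖ ≤ Bb := by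
    intro i a
    have h1 : |r i a| ≤ maxOver hN hK fun i a => |r i a| :=
      Finset.le_sup' (fun p : Fin N × Fin K => |r p.1 p.2|) (Finset.mem_univ (i, a))
    have h2 : ‖φ i a‖ ≤ maxOver hN hK fun i a => ‖φ i a‖ :=
      Finset.le_sup' (fun p : Fin N × Fin K => ‖φ p.1 p.2‖) (Finset.mem_univ (i, a))
    rw [hBb]
    exact mul_le_mul h1 h2 (norm_nonneg _) ((abs_nonneg _).trans h1)
  have hBb0 : 0 ≤ Bb := le_trans (mul_nonneg (abs_nonneg (r ⟨0,hN⟩ ⟨0,hK⟩)) (norm_nonneg _))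
    (hterm ⟨0,hN⟩ ⟨0,hK⟩)
  set c : ℝ := Bb ^ 2 / lamc ^ 2 with hc
  have hc0 : 0 ≤ c := div_nonneg (sq_nonneg _) (sq_nonneg _)
  set g : ℝ → ℝ := fun t => ‖w t‖ ^ 2 with hgdef
  -- derivative of g and its bound
  have hg : ∀ t : ℝ, 0 ≤ t → HasDerivAt g
      (2 * ⟪w t, criticb τ r ψ φ (θ t) (μ t) - criticA τ lamc ψ φ (θ t) (μ t) (w t)⟫) t :=
    fun t ht => (hw t ht).norm_sq
  have hgb : ∀ t : ℝ, 0 ≤ t →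
      2 * ⟪w t, criticb τ r ψ φ (θ t) (μ t) - criticA τ lamc ψ φ (θ t) (μ t) (w t)⟫
        ≤ -lamc * g t + Bb ^ 2 / lamc := by
    intro t ht
    have h1 := inner_drift_le hK τ lamc Bb r ψ φ (θ t) (hμ t ht) hterm (w t)
    have h2 : 2 * (Bb * ‖w t‖) ≤ lamc * ‖w t‖ ^ 2 + Bb ^ 2 / lamc := by
      have hB2 : Bb ^ 2 / lamc * lamc = Bb ^ 2 := div_mul_cancel₀ _ hlam.ne'
      have key : 2 * (Bb * ‖w t‖) * lamc ≤ (lamc * ‖w t‖ ^ 2 + Bb ^ 2 / lamc) * lamc := by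
        nlinarith [sq_nonneg (lamc * ‖w t‖ - Bb)]
      exact le_of_mul_le_mul_right key hlam
    simp only [hgdef]
    linarith
  -- the Lyapunov-type function h
  set h : ℝ → ℝ := fun t => Real.exp (lamc * t) * (g t - c) with hhdef
  have hh : ∀ t : ℝ, 0 ≤ t → HasDerivAt h
      (Real.exp (lamc * t) * lamc * (g t - c) + Real.exp (lamc * t) *
        (2 * ⟪w t, criticb τ r ψ φ (θ t) (μ t) - criticA τ lamc ψ φ (θ t) (μ t) (w t)⟫)) t := by
    intro t ht
    have H := (((hasDerivAt_id t).const_mul lamc).exp).mul ((hg t ht).sub_const c)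
    simp only [id_eq, mul_one] at H
    exact H
  have hanti : AntitoneOn h (Set.Ici (0:ℝ)) := by
    apply antitoneOn_of_deriv_nonpos (convex_Ici 0)
    · exact fun t ht => (hh t ht).continuousAt.continuousWithinAt
    · rw [interior_Ici]
      exact fun t ht => (hh t (le_of_lt ht)).differentiableAt.differentiableWithinAt
    · rw [interior_Ici]
      intro t ht
      rw [(hh t (le_of_lt ht)).deriv]
      have h1 := hgb t (le_of_lt ht)
      have hlc : lamc * c = Bb ^ 2 / lamc := by
        rw [hc]; field_simp
      have hle : lamc * (g t - c) +
          2 * ⟪w t, criticb τ r ψ φ (θ t) (μ t) - criticA τ lamc ψ φ (θ t) (μ t) (w t)⟫ ≤ 0 := by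
        nlinarith
      calc Real.exp (lamc * t) * lamc * (g t - c) + Real.exp (lamc * t) *
            (2 * ⟪w t, criticb τ r ψ φ (θ t) (μ t) - criticA τ lamc ψ φ (θ t) (μ t) (w t)⟫)
          = Real.exp (lamc * t) * (lamc * (g t - c) +
            2 * ⟪w t, criticb τ r ψ φ (θ t) (μ t) - criticA τ lamc ψ φ (θ t) (μ t) (w t)⟫) := by
            ring
        _ ≤ 0 := mul_nonpos_of_nonneg_of_nonpos (Real.exp_nonneg _) hle
  -- conclude
  intro t htT
  have ht0 : (0:ℝ) ≤ t := hT.trans htT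
  have hht : h t ≤ h 0 := hanti Set.self_mem_Ici ht0 ht0
  have hg0 : g 0 ≤ M ^ 2 := by
    simpa [hgdef] using pow_le_pow_left₀ (norm_nonneg (w 0)) hw0 2
  have hh0 : h 0 ≤ M ^ 2 := by
    simp only [hhdef, mul_zero, Real.exp_zero, one_mul]
    linarith
  have hgt : g t ≤ Real.exp (-lamc * t) * M ^ 2 + c := by
    have hept : (0:ℝ) < Real.exp (lamc * t) := Real.exp_pos _
    have : Real.exp (lamc * t) * (g t - c) ≤ M ^ 2 := hht.trans hh0
    have h2 : g t - c ≤ M ^ 2 / Real.exp (lamc * t) := by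
      rw [le_div_iff₀ hept]
      linarith [this]
    have h3 : M ^ 2 / Real.exp (lamc * t) = Real.exp (-lamc * t) * M ^ 2 := by
      rw [neg_mul, Real.exp_neg]
      field_simp
    linarith [h3 ▸ h2]
  have hmono : Real.exp (-lamc * t) * M ^ 2 ≤ Real.exp (-lamc * T) * M ^ 2 := by
    have : -lamc * t ≤ -lamc * T := by nlinarith
    exact mul_le_mul_of_nonneg_right (Real.exp_le_exp.mpr this) (sq_nonneg M)
  have hfinal : g t ≤ Rw ^ 2 := by
    have : Real.exp (-lamc * T) * M ^ 2 ≤ Rw ^ 2 - c := hTabs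
    linarith
  have hRw1 : (1:ℝ) ≤ Rw := hRw ▸ le_max_left _ _
  simp only [hgdef] at hfinal
  nlinarith [norm_nonneg (w t), hfinal, hRw1]
end
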